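/- Let (W,S) be a Coxeter system, H ⊆ S, x ∈ {−1,q}, and s,t ∈ S. Let w = w₂·w₃ ∈ W^H and u = u₂·u₃ ∈ W^H with u ≤ w, w₂,u₂ ∈ W_{{s,t}}, w₃,u₃ ∈ ^{{s,t}}W (length-additive factorizations). If (W_{{s,t}}·u₃) ∩ W^H = {u₃}, then u = u₃ and R^{H,x}_{u,w}(q) = (q−1−x)^{ℓ(w₂)} · R^{H,x}_{u₃,w₃}(q). -/

import Mathlib

/-!
Let `s_i`, `i ∈ {s,t}`, be a left descent of `w₂`. Length-additivity makes it a left descent of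
`w = w₂w₃`, it is not one of `u₃ ∈ ^{s,t}W`, and `s_i u₃ ∉ W^H` because the coset `W_{s,t} u₃`
meets `W^H` only in `u₃`. So the third case of the recursion gives
`R_{u₃,w} = (q-1-x) R_{u₃,s_i w}`, also when `u₃ ≰ w`, where both sides vanish since
`s_i w ≤ w`. Induction on `ℓ(w₂)` gives the formula, and `u = u₂u₃ ∈ W^H` forces `u = u₃`.

The Coxeter-theoretic input is that a nontrivial element of `W_{s,t}` has a left descent in
`{s,t}`, a consequence of the exchange condition. The latter comes from Tits' representation of
`W` on `W × {±1}`: the parity of the number of occurrences of an element in the right inversion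
sequence of a word depends only on the product of the word.
-/

open Polynomial

namespace CIKL

variable {B : Type*} {W : Type*} [Group W] {M : CoxeterMatrix B}

/-- The Bruhat order on a Coxeter group: the reflexive-transitive closure of the
Bruhat graph, which has a directed edge from `a` to `b` whenever `b = a * t` for a
reflection `t` and `ℓ(a) < ℓ(b)`. -/
def bruhatLE (cs : CoxeterSystem M W) (u v : W) : Prop :=
  Relation.ReflTransGen
    (fun a b => ∃ t, cs.IsReflection t ∧ b = a * t ∧ cs.length a < cs.length b) u v

/-- Strict Bruhat order. -/
def bruhatLT (cs : CoxeterSystem M W) (u v : W) : Prop :=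
  bruhatLE cs u v ∧ u ≠ v

/-- The cover relation `u ⊲ v` of the Bruhat order. -/
def bruhatCovBy (cs : CoxeterSystem M W) (u v : W) : Prop :=
  bruhatLT cs u v ∧ ∀ z, bruhatLE cs u z → bruhatLE cs z v → z = u ∨ z = v

/-- `W^H`: minimal left coset representatives, `{w : ℓ(wh) > ℓ(w) for all h ∈ H}`. -/
def minRep (cs : CoxeterSystem M W) (H : Set B) : Set W :=
  {w | ∀ h ∈ H, cs.length w < cs.length (w * cs.simple h)}

/-- `^J W`: minimal right coset representatives, `{w : ℓ(rw) > ℓ(w) for all r ∈ J}`. -/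
def minRepLeft (cs : CoxeterSystem M W) (J : Set B) : Set W :=
  {w | ∀ h ∈ J, cs.length w < cs.length (cs.simple h * w)}

/-- The standard parabolic (dihedral) subgroup `W_{{s,t}}`. -/
def stSubgroup (cs : CoxeterSystem M W) (s t : B) : Subgroup W :=
  Subgroup.closure {cs.simple s, cs.simple t}

/-- The defining recurrence of the parabolic Kazhdan–Lusztig `R`-polynomials
`R^{H,x}_{u,v}` of Deodhar, for `x ∈ {-1, q}`. -/
def IsRFamily (cs : CoxeterSystem M W) (H : Set B) (x : Polynomial ℤ)
    (R : W → W → Polynomial ℤ) : Prop :=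
  (∀ u v, u ∈ minRep cs H → v ∈ minRep cs H → ¬ bruhatLE cs u v → R u v = 0) ∧
  (∀ u, u ∈ minRep cs H → R u u = 1) ∧
  (∀ u v, u ∈ minRep cs H → v ∈ minRep cs H → bruhatLT cs u v →
    ∀ i : B, cs.length (cs.simple i * v) < cs.length v →
      ((cs.length (cs.simple i * u) < cs.length u →
          R u v = R (cs.simple i * u) (cs.simple i * v)) ∧
       (cs.length u < cs.length (cs.simple i * u) → cs.simple i * u ∈ minRep cs H →
          R u v = (X - 1) * R u (cs.simple i * v)
            + X * R (cs.simple i * u) (cs.simple i * v)) ∧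
       (cs.length u < cs.length (cs.simple i * u) → cs.simple i * u ∉ minRep cs H →
          R u v = (X - 1 - x) * R u (cs.simple i * v))))

/-- The defining recurrence of the ordinary Kazhdan–Lusztig `R`-polynomials. -/
def IsOrdRFamily (cs : CoxeterSystem M W) (R : W → W → Polynomial ℤ) : Prop :=
  (∀ u v, ¬ bruhatLE cs u v → R u v = 0) ∧
  (∀ u, R u u = 1) ∧
  (∀ u v, bruhatLT cs u v →
    ∀ i : B, cs.length (cs.simple i * v) < cs.length v →
      ((cs.length (cs.simple i * u) < cs.length u →
          R u v = R (cs.simple i * u) (cs.simple i * v)) ∧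
       (cs.length u < cs.length (cs.simple i * u) →
          R u v = (X - 1) * R u (cs.simple i * v)
            + X * R (cs.simple i * u) (cs.simple i * v))))

/-- The defining properties of the parabolic Kazhdan–Lusztig polynomials
`P^{H,x}_{u,v}`, relative to a given family `R` of parabolic `R`-polynomials. -/
def IsPFamily (cs : CoxeterSystem M W) (H : Set B) (R P : W → W → Polynomial ℤ) : Prop :=
  (∀ u v, u ∈ minRep cs H → v ∈ minRep cs H → ¬ bruhatLE cs u v → P u v = 0) ∧
  (∀ u, u ∈ minRep cs H → P u u = 1) ∧
  (∀ u v, u ∈ minRep cs H → v ∈ minRep cs H → bruhatLT cs u v →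
    2 * (P u v).degree + 1 ≤ ((cs.length v - cs.length u : ℕ) : WithBot ℕ)) ∧
  (∀ u v, u ∈ minRep cs H → v ∈ minRep cs H →
    (P u v).reflect (cs.length v - cs.length u) =
      ∑ᶠ z ∈ {z | bruhatLE cs u z ∧ bruhatLE cs z v ∧ z ∈ minRep cs H},
        R u z * P z v)

/-- A special matching of `w`: an involution of the lower Bruhat interval `[e,w]`
which matches each element to an element covering it or covered by it, and such
that `u₁ ⊲ u₂` and `M u₁ ≠ u₂` imply `M u₁ ≤ M u₂`. -/
def IsSpecialMatching (cs : CoxeterSystem M W) (w : W) (Mm : W → W) : Prop :=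
  (∀ u, bruhatLE cs u w → bruhatLE cs (Mm u) w) ∧
  (∀ u, bruhatLE cs u w → Mm (Mm u) = u) ∧
  (∀ u, bruhatLE cs u w → bruhatCovBy cs u (Mm u) ∨ bruhatCovBy cs (Mm u) u) ∧
  (∀ u₁ u₂, bruhatLE cs u₁ w → bruhatLE cs u₂ w → bruhatCovBy cs u₁ u₂ →
    Mm u₁ ≠ u₂ → bruhatLE cs (Mm u₁) (Mm u₂))

/-- An `H`-special matching of `w`: a special matching `M` of `[e,w]` such that
`u ∈ [e,w]^H` and `M u ⊲ u` imply `M u ∈ W^H`. -/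
def IsHSpecialMatching (cs : CoxeterSystem M W) (H : Set B) (w : W) (Mm : W → W) : Prop :=
  IsSpecialMatching cs w Mm ∧
  (∀ u, bruhatLE cs u w → u ∈ minRep cs H → bruhatCovBy cs (Mm u) u →
    Mm u ∈ minRep cs H)

/-- The polynomials `R_i` of Lemma 2 (`ricorsioni`):
`R_i = (q-1) ∑_{k=0}^{i-1} (-1)^k q^k` for `i` odd and
`R_i = (q-1)² ∑_{k=0}^{(i-2)/2} q^{2k}` for `i` even. -/
noncomputable def seqR (i : ℕ) : Polynomial ℤ :=
  if Odd i then (X - 1) * ∑ k ∈ Finset.range i, (-1) ^ k * X ^ k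
  else (X - 1) ^ 2 * ∑ k ∈ Finset.range (i / 2), X ^ (2 * k)

section Exchange

open scoped Classical

variable (cs : CoxeterSystem M W)

local prefix:100 "σ" => cs.simple
local prefix:100 "π" => cs.wordProd
local prefix:100 "ℓ" => cs.length
local prefix:100 "ris " => cs.rightInvSeq

lemma simple_mul_mul_simple_eq_simple_iff (i : B) (w : W) :
    σ i * w * σ i = σ i ↔ w = σ i := by
  constructor
  · intro h
    simpa [mul_assoc, cs.simple_mul_simple_cancel_left, cs.simple_mul_simple_self]
      using congrArg (fun z => σ i * z * σ i) h
  · rintro rfl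
    simp [cs.simple_mul_simple_self]

noncomputable def signPerm (i : B) : Equiv.Perm (W × ℤˣ) :=
  Function.Involutive.toPerm (fun p => (σ i * p.1 * σ i, if p.1 = σ i then -p.2 else p.2))
    (by
      rintro ⟨w, ε⟩
      have hconj : σ i * (σ i * w * σ i) * σ i = w := by
        simp [mul_assoc, cs.simple_mul_simple_self, cs.simple_mul_simple_cancel_left]
      simp only [simple_mul_mul_simple_eq_simple_iff, hconj]
      split_ifs <;> simp)

lemma signPerm_apply (i : B) (w : W) (ε : ℤˣ) :
    signPerm cs i (w, ε) = (σ i * w * σ i, if w = σ i then -ε else ε) := rfl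

lemma prod_map_signPerm_apply (ω : List B) (w : W) (ε : ℤˣ) :
    (ω.map (signPerm cs)).prod (w, ε) =
      (π ω * w * (π ω)⁻¹, ε * (-1) ^ (ris ω).count w) := by
  induction ω with
  | nil => simp
  | cons i ω ih =>
    have hcond : π ω * w * (π ω)⁻¹ = σ i ↔ (π ω)⁻¹ * σ i * π ω = w := by
      constructor <;> intro h <;> rw [← h] <;> group
    simp only [List.map_cons, List.prod_cons, Equiv.Perm.mul_apply, ih, signPerm_apply,
      cs.wordProd_cons, CoxeterSystem.rightInvSeq, List.count_cons, beq_iff_eq, hcond,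
      mul_inv_rev, cs.inv_simple, Prod.mk.injEq]
    refine ⟨by group, ?_⟩
    split_ifs <;> simp [pow_succ]

lemma prod_map_flatten_replicate_pair {G : Type*} [Monoid G] (f : B → G) (i j : B) (n : ℕ) :
    (((List.replicate n [i, j]).flatten).map f).prod = (f i * f j) ^ n := by
  simp [List.map_flatten, List.prod_flatten, List.map_replicate, List.prod_replicate]

lemma rightInvSeq_flatten_replicate_pair (i j : B) (n : ℕ) :
    ris (List.replicate n [i, j]).flatten =
      ((List.range (2 * n)).map fun r => (σ j * σ i) ^ r * σ j).reverse := by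
  induction n with
  | zero => simp
  | succ n ih =>
    have hsemi : SemiconjBy (σ j) (σ i * σ j) (σ j * σ i) := by
      simp [SemiconjBy, mul_assoc]
    have hpow : σ j * (σ i * σ j) ^ n = (σ j * σ i) ^ n * σ j := (hsemi.pow_right n).eq
    have hinv : ((σ i * σ j) ^ n)⁻¹ = (σ j * σ i) ^ n := by
      rw [← inv_pow, mul_inv_rev, cs.inv_simple, cs.inv_simple]
    have hw : π (List.replicate n [i, j]).flatten = (σ i * σ j) ^ n :=
      prod_map_flatten_replicate_pair cs.simple i j n
    rw [List.replicate_succ, List.flatten_cons, List.cons_append, List.cons_append,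
      List.nil_append, CoxeterSystem.rightInvSeq, CoxeterSystem.rightInvSeq, ih,
      cs.wordProd_cons, hw, show 2 * (n + 1) = 2 * n + 1 + 1 by ring, List.range_succ,
      List.range_succ]
    simp only [List.map_append, List.map_cons, List.map_nil, List.append_assoc,
      List.cons_append, List.nil_append, List.reverse_append, List.reverse_cons,
      List.reverse_nil, List.cons.injEq, and_true]
    constructor
    · have hrefl : ((σ j * σ i) ^ n * σ j)⁻¹ = (σ j * σ i) ^ n * σ j := by
        rw [← hpow, mul_inv_rev, cs.inv_simple, hinv, hpow]
      rw [hpow, hrefl]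
      simp only [← mul_assoc]
      rw [mul_assoc _ (σ j) (σ i), ← pow_succ, ← pow_add]
      congr 2
      ring
    · rw [hinv, mul_assoc, hpow, ← mul_assoc, ← pow_add, two_mul]

lemma signPerm_liftable : M.IsLiftable (signPerm cs) := by
  intro i j
  ext ⟨w, ε⟩ : 1
  -- `(s j * s i) ^ M i j = 1`, so each element occurs in `ris` an even number of times.
  have hperiodic : ((fun r => (σ j * σ i) ^ r * σ j) ∘ fun r => M i j + r) =
      fun r => (σ j * σ i) ^ r * σ j := by
    funext r
    simp [pow_add]
  have hcount : (ris (List.replicate (M i j) [i, j]).flatten).count w =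
      2 * ((List.range (M i j)).map fun r => (σ j * σ i) ^ r * σ j).count w := by
    rw [rightInvSeq_flatten_replicate_pair, List.count_reverse, two_mul, List.range_add,
      List.map_append, List.count_append, List.map_map, hperiodic, ← two_mul]
  have hword : π (List.replicate (M i j) [i, j]).flatten = 1 :=
    (prod_map_flatten_replicate_pair cs.simple i j _).trans (cs.simple_mul_simple_pow i j)
  rw [← prod_map_flatten_replicate_pair, prod_map_signPerm_apply, hcount, pow_mul, hword]
  simp

noncomputable def signRep : W →* Equiv.Perm (W × ℤˣ) :=
  cs.lift ⟨signPerm cs, signPerm_liftable cs⟩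

lemma signRep_wordProd (ω : List B) : signRep cs (π ω) = (ω.map (signPerm cs)).prod := by
  rw [CoxeterSystem.wordProd, map_list_prod, List.map_map]
  congr 1
  exact List.map_congr_left fun i _ => cs.lift_apply_simple (signPerm_liftable cs) i

theorem neg_one_pow_count_rightInvSeq_eq {ω ω' : List B} (h : π ω = π ω') (t : W) :
    (-1 : ℤˣ) ^ (ris ω).count t = (-1) ^ (ris ω').count t := by
  simpa [signRep_wordProd, prod_map_signPerm_apply] using
    congrArg (fun g => (signRep cs g (t, 1)).2) h

theorem simple_mem_rightInvSeq_of_isRightDescent {ω : List B} {i : B}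
    (hi : cs.IsRightDescent (π ω) i) : σ i ∈ ris ω := by
  obtain ⟨ω', hω', hprod⟩ := cs.exists_isReduced (π ω * σ i)
  have hconcat : π ω = π (ω'.concat i) := by
    rw [cs.wordProd_concat, ← hprod, cs.simple_mul_simple_cancel_right]
  have hcount : ((ris ω').map (MulAut.conj (σ i))).count (σ i) = (ris ω').count (σ i) := by
    have h := List.count_map_of_injective (ris ω') _ (MulAut.conj (σ i)).injective (σ i)
    rwa [MulAut.conj_apply, mul_inv_cancel_right] at h
  -- Otherwise parity puts `s i` into `ris ω'`, making `i` a right descent of `π ω * s i`.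
  by_contra hnot
  have hparity := neg_one_pow_count_rightInvSeq_eq cs hconcat (σ i)
  rw [List.count_eq_zero_of_not_mem hnot, cs.rightInvSeq_concat, List.concat_eq_append,
    List.count_append, List.count_singleton_self, hcount] at hparity
  have hmem : σ i ∈ ris ω' := by
    by_contra hnot'
    rw [List.count_eq_zero_of_not_mem hnot'] at hparity
    exact absurd hparity (by decide)
  have hlt := (cs.isRightInversion_of_mem_rightInvSeq hω' hmem).2
  rw [← hprod, cs.simple_mul_simple_cancel_right] at hlt
  exact absurd hi (not_lt.mpr hlt.le)

theorem exists_eraseIdx_of_isRightDescent {ω : List B} {i : B}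
    (hi : cs.IsRightDescent (π ω) i) : ∃ k < ω.length, π ω * σ i = π (ω.eraseIdx k) := by
  obtain ⟨k, hk, hget⟩ :=
    List.mem_iff_getElem.mp (simple_mem_rightInvSeq_of_isRightDescent cs hi)
  refine ⟨k, by simpa using hk, ?_⟩
  rw [← cs.wordProd_mul_getD_rightInvSeq, List.getD_eq_getElem _ _ hk, hget]

theorem exists_isReduced_wordProd_mul_simple {J : Set B} {ω : List B} (hω : cs.IsReduced ω)
    (hωJ : ∀ i ∈ ω, i ∈ J) {j : B} (hj : j ∈ J) :
    ∃ ω' : List B, cs.IsReduced ω' ∧ (∀ i ∈ ω', i ∈ J) ∧ π ω' = π ω * σ j := by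
  by_cases hdesc : cs.IsRightDescent (π ω) j
  · obtain ⟨k, hk, heq⟩ := exists_eraseIdx_of_isRightDescent cs hdesc
    refine ⟨ω.eraseIdx k, ?_, fun i hi => hωJ i ((List.eraseIdx_sublist ω k).subset hi),
      heq.symm⟩
    have hlen := cs.isRightDescent_iff.mp hdesc
    rw [CoxeterSystem.IsReduced, ← heq, List.length_eraseIdx_of_lt hk, ← hω.eq]
    omega
  · refine ⟨ω.concat j, ?_, ?_, cs.wordProd_concat j ω⟩
    · rw [CoxeterSystem.IsReduced, cs.wordProd_concat, cs.not_isRightDescent_iff.mp hdesc,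
        hω.eq, List.length_concat]
    · simp only [List.concat_eq_append, List.mem_append, List.mem_singleton]
      rintro i (hi | rfl)
      exacts [hωJ i hi, hj]

theorem exists_isReduced_of_mem_closure {J : Set B} {g : W}
    (hg : g ∈ Subgroup.closure (cs.simple '' J)) :
    ∃ ω : List B, cs.IsReduced ω ∧ (∀ i ∈ ω, i ∈ J) ∧ π ω = g := by
  induction hg using Subgroup.closure_induction_right with
  | one => exact ⟨[], by simp [CoxeterSystem.IsReduced], by simp, rfl⟩
  | mul_right _ _ _ hy ih =>
    obtain ⟨j, hj, rfl⟩ := hy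
    obtain ⟨ω, hω, hωJ, rfl⟩ := ih
    exact exists_isReduced_wordProd_mul_simple cs hω hωJ hj
  | mul_inv_cancel _ _ _ hy ih =>
    obtain ⟨j, hj, rfl⟩ := hy
    obtain ⟨ω, hω, hωJ, rfl⟩ := ih
    rw [cs.inv_simple]
    exact exists_isReduced_wordProd_mul_simple cs hω hωJ hj

theorem exists_isLeftDescent_mem_of_mem_closure {J : Set B} {g : W}
    (hg : g ∈ Subgroup.closure (cs.simple '' J)) (hne : g ≠ 1) :
    ∃ i ∈ J, cs.IsLeftDescent g i := by
  obtain ⟨ω, hω, hωJ, rfl⟩ := exists_isReduced_of_mem_closure cs hg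
  cases ω with
  | nil => exact absurd cs.wordProd_nil hne
  | cons i ω =>
    refine ⟨i, hωJ i List.mem_cons_self, ?_⟩
    have hlen : ℓ (π (i :: ω)) = ω.length + 1 := hω.eq
    rw [CoxeterSystem.IsLeftDescent, cs.wordProd_cons, cs.simple_mul_simple_cancel_left,
      ← cs.wordProd_cons, hlen]
    exact Nat.lt_succ_of_le (cs.length_wordProd_le ω)

end Exchange

section Parabolic

variable (cs : CoxeterSystem M W)

local prefix:100 "σ" => cs.simple
local prefix:100 "ℓ" => cs.length

lemma stSubgroup_eq_closure_image (s t : B) :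
    stSubgroup cs s t = Subgroup.closure (cs.simple '' {s, t}) := by
  rw [Set.image_pair]
  rfl

lemma bruhatLE_simple_mul_self {w : W} {i : B} (h : cs.IsLeftDescent w i) :
    bruhatLE cs (σ i * w) w := by
  refine Relation.ReflTransGen.single ⟨(σ i * w)⁻¹ * σ i * (σ i * w), ?_, ?_, h⟩
  · simpa using (cs.isReflection_simple i).conj (σ i * w)⁻¹
  · rw [show σ i * w * ((σ i * w)⁻¹ * σ i * (σ i * w)) = σ i * (σ i * w) by group,
      cs.simple_mul_simple_cancel_left]

lemma simple_mul_mem_minRep {H : Set B} {w : W} {i : B} (hw : w ∈ minRep cs H)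
    (h : cs.IsLeftDescent w i) : σ i * w ∈ minRep cs H := by
  intro j hj
  have h1 := hw j hj
  have h2 := cs.length_le_length_mul_add_left (σ i) (w * σ j)
  rw [cs.length_simple, ← mul_assoc] at h2
  have h3 := cs.isLeftDescent_iff.mp h
  rcases cs.length_mul_simple (σ i * w) j with h4 | h4 <;> omega

theorem IsRFamily.eq_mul_of_simple_mul_not_mem_minRep {H : Set B} {x : ℤ[X]}
    {R : W → W → ℤ[X]} (hR : IsRFamily cs H x R) {u w : W} {i : B} (hu : u ∈ minRep cs H)
    (hw : w ∈ minRep cs H) (hwi : cs.IsLeftDescent w i) (hui : ¬ cs.IsLeftDescent u i)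
    (hsu : σ i * u ∉ minRep cs H) :
    R u w = (X - 1 - x) * R u (σ i * w) := by
  by_cases huw : bruhatLE cs u w
  · have hne : u ≠ w := by
      rintro rfl
      exact hui hwi
    have hlt : ℓ u < ℓ (σ i * u) := by
      have := cs.not_isLeftDescent_iff.mp hui
      omega
    exact (hR.2.2 u w hu hw ⟨huw, hne⟩ i hwi).2.2 hlt hsu
  · have hsw : ¬ bruhatLE cs u (σ i * w) := fun h =>
      huw (h.trans (bruhatLE_simple_mul_self cs hwi))
    rw [hR.1 u w hu hw huw, hR.1 u _ hu (simple_mul_mem_minRep cs hw hwi) hsw, mul_zero]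

theorem IsRFamily.apply_mul_eq_pow_mul {H : Set B} {x : ℤ[X]} {R : W → W → ℤ[X]}
    (hR : IsRFamily cs H x R) {J : Set B} {u : W} (huH : u ∈ minRep cs H)
    (huJ : u ∈ minRepLeft cs J) (hJ : ∀ i ∈ J, σ i * u ∉ minRep cs H) {w₂ w₃ : W}
    (hw₂ : w₂ ∈ Subgroup.closure (cs.simple '' J)) (hwH : w₂ * w₃ ∈ minRep cs H)
    (hwl : ℓ (w₂ * w₃) = ℓ w₂ + ℓ w₃) :
    R u (w₂ * w₃) = (X - 1 - x) ^ ℓ w₂ * R u w₃ := by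
  induction hn : ℓ w₂ generalizing w₂ with
  | zero => rw [cs.length_eq_zero_iff.mp hn, one_mul, pow_zero, one_mul]
  | succ n ih =>
    obtain ⟨i, hiJ, hi⟩ := exists_isLeftDescent_mem_of_mem_closure cs hw₂ (by
      rintro rfl
      simp at hn)
    have hi' := cs.isLeftDescent_iff.mp hi
    have hlen := cs.length_le_length_mul_add_left (σ i) (w₂ * w₃)
    rw [cs.length_simple, ← mul_assoc] at hlen
    have hsub := cs.length_mul_le (σ i * w₂) w₃
    have hwl' : ℓ (σ i * w₂ * w₃) = ℓ (σ i * w₂) + ℓ w₃ := by omega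
    have hwi : cs.IsLeftDescent (w₂ * w₃) i := by
      rw [CoxeterSystem.IsLeftDescent, ← mul_assoc]
      omega
    have hsw₂ : σ i * w₂ ∈ Subgroup.closure (cs.simple '' J) :=
      Subgroup.mul_mem _ (Subgroup.subset_closure ⟨i, hiJ, rfl⟩) hw₂
    have hswH : σ i * w₂ * w₃ ∈ minRep cs H := by
      rw [mul_assoc]
      exact simple_mul_mem_minRep cs hwH hwi
    rw [hR.eq_mul_of_simple_mul_not_mem_minRep cs huH hwH hwi (huJ i hiJ).not_gt (hJ i hiJ),
      ← mul_assoc, ih hsw₂ hswH hwl' (by omega), pow_succ', mul_assoc]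

end Parabolic

theorem R_of_coset_singleton_general
    {B : Type*} {W : Type*} [Group W] {M : CoxeterMatrix B} (cs : CoxeterSystem M W)
    (H : Set B) (x : Polynomial ℤ)
    (R : W → W → Polynomial ℤ) (hR : IsRFamily cs H x R)
    (s t : B) (w u w₂ w₃ u₂ u₃ : W)
    (hw : w = w₂ * w₃) (hu : u = u₂ * u₃)
    (hwl : cs.length w = cs.length w₂ + cs.length w₃)
    (hw₂ : w₂ ∈ stSubgroup cs s t) (hu₂ : u₂ ∈ stSubgroup cs s t)
    (hu₃ : u₃ ∈ minRepLeft cs {s, t})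
    (hwH : w ∈ minRep cs H) (huH : u ∈ minRep cs H)
    (hsing : ((fun g => g * u₃) '' (stSubgroup cs s t : Set W)) ∩ minRep cs H = {u₃}) :
    u = u₃ ∧ R u w = (X - 1 - x) ^ (cs.length w₂) * R u₃ w₃ := by
  have hcoset : ∀ g ∈ stSubgroup cs s t, g * u₃ ∈ minRep cs H → g * u₃ = u₃ :=
    fun g hg hgH => hsing.le ⟨⟨g, hg, rfl⟩, hgH⟩
  have hu₃H : u₃ ∈ minRep cs H := (hsing.ge rfl).2
  have huu₃ : u = u₃ := hu ▸ hcoset u₂ hu₂ (hu ▸ huH)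
  have hst : ∀ i ∈ ({s, t} : Set B), cs.simple i * u₃ ∉ minRep cs H := by
    intro i hi hiH
    have hsi : cs.simple i ∈ stSubgroup cs s t := by
      rw [stSubgroup_eq_closure_image]
      exact Subgroup.subset_closure ⟨i, hi, rfl⟩
    exact (hu₃ i hi).ne' (congrArg cs.length (hcoset _ hsi hiH))
  rw [stSubgroup_eq_closure_image] at hw₂
  subst hw
  exact ⟨huu₃, huu₃ ▸ hR.apply_mul_eq_pow_mul cs hu₃H hu₃ hst hw₂ hwH hwl⟩

/-- Lemma `sesingleton`: with length-additive factorizations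
`w = w₂·w₃`, `u = u₂·u₃` (`w₂,u₂ ∈ W_{{s,t}}`, `w₃,u₃ ∈ ^{{s,t}}W`), `u ≤ w`,
`u, w ∈ W^H`, if `(W_{{s,t}}·u₃) ∩ W^H = {u₃}` then `u = u₃` and
`R^{H,x}_{u,w} = (q-1-x)^{ℓ(w₂)} R^{H,x}_{u₃,w₃}`. -/
theorem R_of_coset_singleton
    {B : Type*} {W : Type*} [Group W] {M : CoxeterMatrix B} (cs : CoxeterSystem M W)
    (H : Set B) (x : Polynomial ℤ) (hx : x = -1 ∨ x = X)
    (R : W → W → Polynomial ℤ) (hR : IsRFamily cs H x R)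
    (s t : B) (w u w₂ w₃ u₂ u₃ : W)
    (hw : w = w₂ * w₃) (hu : u = u₂ * u₃)
    (hwl : cs.length w = cs.length w₂ + cs.length w₃)
    (hul : cs.length u = cs.length u₂ + cs.length u₃)
    (hw₂ : w₂ ∈ stSubgroup cs s t) (hu₂ : u₂ ∈ stSubgroup cs s t)
    (hw₃ : w₃ ∈ minRepLeft cs {s, t}) (hu₃ : u₃ ∈ minRepLeft cs {s, t})
    (hwH : w ∈ minRep cs H) (huH : u ∈ minRep cs H)
    (huw : bruhatLE cs u w)
    (hsing : ((fun g => g * u₃) '' (stSubgroup cs s t : Set W)) ∩ minRep cs H = {u₃}) :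
    u = u₃ ∧ R u w = (X - 1 - x) ^ (cs.length w₂) * R u₃ w₃ :=
  R_of_coset_singleton_general cs H x R hR s t w u w₂ w₃ u₂ u₃ hw hu hwl hw₂ hu₂ hu₃ hwH huH hsing

end CIKL
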